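/- Let A be a clone over ℕ, B a right A-algebra, and Λ : B → B an abstract binding operation on x_1. Define 𝛌x₁.b := Λ(b[x_1, x_3, x_4, x_5, …]) (the substitution fixing position 1 and sending position j to x_{j+1} for j ≥ 2). Then for all b ∈ B and f : ℕ → A: (1) 𝛌x₁.b = (Λb)⁺; (2) Λb = (𝛌x₁.b)⁻; (3) (𝛌x₁.b)[f] = (𝛌x₁.(b[x_1, (f 2)⁺, (f 3)⁺, …]))⁻ (the inner substitution sends position 1 to x_1 and position j to (f j)⁺ for j ≥ 2); (4) 𝛌x₁.b = (𝛌x₁.(b[x_1, x_3, x_4, …]))⁻. -/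
import Mathlib


/-- A clone over the positive integers ℕ = {1,2,3,…}. -/
structure CloneN (A : Type*) where
  sub : A → (ℕ+ → A) → A
  x : ℕ+ → A
  sub_assoc : ∀ (a : A) (f g : ℕ+ → A), sub (sub a f) g = sub a (fun i => sub (f i) g)
  sub_x : ∀ a : A, sub a x = a
  x_sub : ∀ (i : ℕ+) (f : ℕ+ → A), sub (x i) f = f i

/-- A right algebra of a clone over ℕ. -/
structure RightAlgOn (A : Type*) (C : CloneN A) (B : Type*) where
  act : B → (ℕ+ → A) → B
  act_act : ∀ (b : B) (f g : ℕ+ → A), act (act b f) g = act b (fun i => C.sub (f i) g)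
  act_x : ∀ b : B, act b C.x = b

/-- `b⁺ = b[x_2,x_3,x_4,…]`. -/
def bplus {A B : Type*} (C : CloneN A) (R : RightAlgOn A C B) (b : B) : B :=
  R.act b (fun k => C.x (k + 1))

/-- `b⁻ = b[x_1,x_1,x_2,x_3,…]`. -/
def bminus {A B : Type*} (C : CloneN A) (R : RightAlgOn A C B) (b : B) : B :=
  R.act b (fun j => if j = 1 then C.x 1 else C.x (j - 1))

/-- `Λ : B → B` is an abstract binding operation on `x_1`. -/
def IsAbsBinding1 {A B : Type*} (C : CloneN A) (R : RightAlgOn A C B)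
    (L : B → B) : Prop :=
  ∀ (b : B) (f : ℕ+ → A),
    R.act (L b) f = L (R.act b (fun j =>
      if j = 1 then C.x 1 else C.sub (f (j - 1)) (fun k => C.x (k + 1))))

/-- `𝛌x₁.b := Λ(b[x_1, x_3, x_4, x_5, …])` (position `1` fixed, position `j ≥ 2`
goes to `x_{j+1}`). -/
def lamx1 {A B : Type*} (C : CloneN A) (R : RightAlgOn A C B) (L : B → B)
    (b : B) : B :=
  L (R.act b (fun j => if j = 1 then C.x 1 else C.x (j + 1)))

/-- Basic identities for the derived binder `𝛌x₁`:
(1) `𝛌x₁.b = (Λb)⁺`; (2) `Λb = (𝛌x₁.b)⁻`;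
(3) `(𝛌x₁.b)[f] = (𝛌x₁.(b[x_1,(f 2)⁺,(f 3)⁺,…]))⁻`;
(4) `𝛌x₁.b = (𝛌x₁.(b[x_1,x_3,x_4,…]))⁻`. -/
theorem lamx1_identities {A B : Type*} (C : CloneN A) (R : RightAlgOn A C B)
    (L : B → B) (hL : IsAbsBinding1 C R L) :
    (∀ b : B, lamx1 C R L b = bplus C R (L b)) ∧
    (∀ b : B, L b = bminus C R (lamx1 C R L b)) ∧
    (∀ (b : B) (f : ℕ+ → A),
      R.act (lamx1 C R L b) f =
        bminus C R (lamx1 C R L (R.act b (fun j =>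
          if j = 1 then C.x 1 else C.sub (f j) (fun k => C.x (k + 1)))))) ∧
    (∀ b : B,
      lamx1 C R L b =
        bminus C R (lamx1 C R L (R.act b (fun j =>
          if j = 1 then C.x 1 else C.x (j + 1))))) := by

  -- helper: for j ≠ 1 in ℕ+, j - 1 + 1 = j
  have hsub : ∀ j : ℕ+, j ≠ 1 → j - 1 + 1 = j := by
    intro j hj
    have h1 : 1 < j := lt_of_le_of_ne j.one_le (Ne.symm hj)
    exact PNat.sub_add_of_lt h1
  have hadd1 : ∀ j : ℕ+, j + 1 ≠ 1 := by
    intro j h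
    have := congrArg (PNat.val) h
    simp [PNat.add_coe] at this
  have hps : ∀ j : ℕ+, j + 1 - 1 = j := by
    intro j
    apply PNat.coe_injective
    rw [PNat.sub_coe]
    have : (1:ℕ+) < j + 1 := by
      apply PNat.lt_add_left
    simp [this, PNat.add_coe]
  -- (1)
  have h1 : ∀ b : B, lamx1 C R L b = bplus C R (L b) := by
    intro b
    unfold lamx1 bplus
    rw [hL]
    congr 1
    congr 1
    funext j
    by_cases hj : j = 1
    · simp [hj]
    · simp only [hj, if_false, C.x_sub, hsub j hj]
  -- (2)
  have h2 : ∀ b : B, L b = bminus C R (lamx1 C R L b) := by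
    intro b
    rw [h1]
    unfold bplus bminus
    rw [R.act_act]
    have : (fun i : ℕ+ => C.sub (C.x (i + 1)) (fun j => if j = 1 then C.x 1 else C.x (j - 1))) = C.x := by
      funext i
      rw [C.x_sub]
      simp [hadd1, hps]
    rw [this, R.act_x]
  -- (3)
  have h3 : ∀ (b : B) (f : ℕ+ → A),
      R.act (lamx1 C R L b) f =
        bminus C R (lamx1 C R L (R.act b (fun j =>
          if j = 1 then C.x 1 else C.sub (f j) (fun k => C.x (k + 1))))) := by
    intro b f
    rw [← h2]
    unfold lamx1
    rw [hL]
    congr 1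
    rw [R.act_act]
    congr 1
    funext j
    by_cases hj : j = 1
    · simp [hj, C.x_sub]
    · simp [hj, C.x_sub, hadd1, hps]
  -- (4)
  refine ⟨h1, h2, ?_, ?_⟩
  · exact h3
  · intro b
    have heq : (fun j : ℕ+ => if j = 1 then C.x 1 else C.sub (C.x j) fun k => C.x (k + 1))
        = (fun j => if j = 1 then C.x 1 else C.x (j + 1)) := by
      funext j
      by_cases hj : j = 1 <;> simp [hj, C.x_sub]
    have := h3 b C.x
    rw [R.act_x, heq] at this
    exact this
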